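/- Let N be a real square matrix and define the one-variable Alexander-type polynomial D(t) = det(tN − Nᵀ). If ω lies on the unit circle, ω ≠ 1, and D(ω) ≠ 0, then the signature function σ(ω) = sgn((1−ω)N + (1−conj(ω))Nᵀ) is locally constant at ω: there is a neighborhood of ω on the unit circle on which σ is constant. -/

import Mathlib

set_option maxHeartbeats 1000000


open Matrix

noncomputable def sgn {ι : Type*} [Fintype ι] [DecidableEq ι]
    {M : Matrix ι ι ℂ} (hM : M.IsHermitian) : ℤ :=
  ((Finset.univ.filter fun i => 0 < hM.eigenvalues i).card : ℤ) -
  ((Finset.univ.filter fun i => hM.eigenvalues i < 0).card : ℤ)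

/-- The Tristram–Levine signature matrix at `ω` for a real Seifert matrix `N`. -/
noncomputable def TLmatrix {n : ℕ} (N : Matrix (Fin n) (Fin n) ℝ) (ω : ℂ) :
    Matrix (Fin n) (Fin n) ℂ :=
  (1 - ω) • (N.map Complex.ofReal) + (1 - starRingEnd ℂ ω) • (N.map Complex.ofReal)ᵀ


lemma quad_expand {n : ℕ} {M : Matrix (Fin n) (Fin n) ℂ} (hM : M.IsHermitian)
    (x : EuclideanSpace ℂ (Fin n)) :
    (inner ℂ x (Matrix.toEuclideanLin M x) : ℂ).re
      = ∑ i, hM.eigenvalues i * ‖hM.eigenvectorBasis.repr x i‖ ^ 2 := by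
  set b := hM.eigenvectorBasis with hb
  have hsym := (Matrix.isHermitian_iff_isSymmetric.1 hM)
  have hTb : ∀ i, Matrix.toEuclideanLin M (b i) = hM.eigenvalues i • (b i) := by
    intro i
    apply (WithLp.equiv 2 (Fin n → ℂ)).injective
    simpa [Matrix.toEuclideanLin_apply] using hM.mulVec_eigenvectorBasis i
  have hrepr : ∀ i, b.repr (Matrix.toEuclideanLin M x) i
      = (hM.eigenvalues i : ℂ) * b.repr x i := by
    intro i
    rw [b.repr_apply_apply, b.repr_apply_apply, ← hsym (b i) x, hTb i,
      RCLike.real_smul_eq_coe_smul (K := ℂ), inner_smul_left]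
    simp
  rw [← b.repr.inner_map_map x (Matrix.toEuclideanLin M x)]
  rw [PiLp.inner_apply]
  rw [Complex.re_sum]
  congr 1; funext i
  rw [hrepr i]
  have : (starRingEnd ℂ) (b.repr x i) * ((hM.eigenvalues i : ℂ) * b.repr x i)
      = (hM.eigenvalues i : ℂ) * Complex.normSq (b.repr x i) := by
    rw [Complex.normSq_eq_conj_mul_self]; ring
  rw [RCLike.inner_apply, mul_comm, this, ← Complex.ofReal_mul, Complex.ofReal_re,
    Complex.normSq_eq_norm_sq]

lemma norm_sq_expand {n : ℕ} (b : OrthonormalBasis (Fin n) ℂ (EuclideanSpace ℂ (Fin n)))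
    (x : EuclideanSpace ℂ (Fin n)) :
    ‖x‖ ^ 2 = ∑ i, ‖b.repr x i‖ ^ 2 := by
  rw [← b.repr.norm_map x, EuclideanSpace.norm_eq,
    Real.sq_sqrt (by positivity)]

lemma finrank_le_card_pos {n : ℕ} {M : Matrix (Fin n) (Fin n) ℂ} (hM : M.IsHermitian)
    (W : Submodule ℂ (EuclideanSpace ℂ (Fin n)))
    (hW : ∀ x ∈ W, x ≠ 0 → 0 < (inner ℂ x (Matrix.toEuclideanLin M x) : ℂ).re) :
    Module.finrank ℂ W ≤ (Finset.univ.filter fun i => 0 < hM.eigenvalues i).card := by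
  classical
  set S := Finset.univ.filter fun i => 0 < hM.eigenvalues i with hS
  set b := hM.eigenvectorBasis with hb
  let L : EuclideanSpace ℂ (Fin n) →ₗ[ℂ] ({i // i ∈ S} → ℂ) :=
    { toFun := fun x i => b.repr x i.1
      map_add' := by intro x y; funext i; simp
      map_smul' := by intro c x; funext i; simp }
  have hinj : Function.Injective (L.domRestrict W) := by
    rw [← LinearMap.ker_eq_bot, LinearMap.ker_eq_bot']
    rintro ⟨x, hx⟩ hLx
    have hzero : ∀ i ∈ S, b.repr x i = 0 := by
      intro i hi
      exact congrFun hLx ⟨i, hi⟩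
    rw [Submodule.mk_eq_zero]
    by_contra hne
    have hpos := hW x hx hne
    have hle : (inner ℂ x (Matrix.toEuclideanLin M x) : ℂ).re ≤ 0 := by
      rw [quad_expand hM x]
      apply Finset.sum_nonpos
      intro i _
      by_cases hiS : i ∈ S
      · simp [← hb, hzero i hiS]
      · have hnp : ¬ 0 < hM.eigenvalues i := by simpa [hS] using hiS
        exact mul_nonpos_of_nonpos_of_nonneg (le_of_not_gt hnp) (by positivity)
    linarith
  calc Module.finrank ℂ W ≤ Module.finrank ℂ ({i // i ∈ S} → ℂ) :=
        LinearMap.finrank_le_finrank_of_injective hinj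
    _ = S.card := by
        rw [Module.finrank_fintype_fun_eq_card, Fintype.card_coe]

lemma finrank_le_card_neg {n : ℕ} {M : Matrix (Fin n) (Fin n) ℂ} (hM : M.IsHermitian)
    (W : Submodule ℂ (EuclideanSpace ℂ (Fin n)))
    (hW : ∀ x ∈ W, x ≠ 0 → (inner ℂ x (Matrix.toEuclideanLin M x) : ℂ).re < 0) :
    Module.finrank ℂ W ≤ (Finset.univ.filter fun i => hM.eigenvalues i < 0).card := by
  classical
  set S := Finset.univ.filter fun i => hM.eigenvalues i < 0 with hS
  set b := hM.eigenvectorBasis with hb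
  let L : EuclideanSpace ℂ (Fin n) →ₗ[ℂ] ({i // i ∈ S} → ℂ) :=
    { toFun := fun x i => b.repr x i.1
      map_add' := by intro x y; funext i; simp
      map_smul' := by intro c x; funext i; simp }
  have hinj : Function.Injective (L.domRestrict W) := by
    rw [← LinearMap.ker_eq_bot, LinearMap.ker_eq_bot']
    rintro ⟨x, hx⟩ hLx
    have hzero : ∀ i ∈ S, b.repr x i = 0 := by
      intro i hi
      exact congrFun hLx ⟨i, hi⟩
    rw [Submodule.mk_eq_zero]
    by_contra hne
    have hneg := hW x hx hne
    have hle : 0 ≤ (inner ℂ x (Matrix.toEuclideanLin M x) : ℂ).re := by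
      rw [quad_expand hM x]
      apply Finset.sum_nonneg
      intro i _
      by_cases hiS : i ∈ S
      · simp [← hb, hzero i hiS]
      · have hnp : ¬ hM.eigenvalues i < 0 := by simpa [hS] using hiS
        exact mul_nonneg (le_of_not_gt hnp) (by positivity)
    linarith
  calc Module.finrank ℂ W ≤ Module.finrank ℂ ({i // i ∈ S} → ℂ) :=
        LinearMap.finrank_le_finrank_of_injective hinj
    _ = S.card := by
        rw [Module.finrank_fintype_fun_eq_card, Fintype.card_coe]

lemma exists_pos_subspace {n : ℕ} {M : Matrix (Fin n) (Fin n) ℂ} (hM : M.IsHermitian)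
    {d : ℝ} (hd : ∀ i, 0 < hM.eigenvalues i → d ≤ hM.eigenvalues i) :
    ∃ P : Submodule ℂ (EuclideanSpace ℂ (Fin n)),
      Module.finrank ℂ P = (Finset.univ.filter fun i => 0 < hM.eigenvalues i).card ∧
      ∀ x ∈ P, d * ‖x‖ ^ 2 ≤ (inner ℂ x (Matrix.toEuclideanLin M x) : ℂ).re := by
  classical
  set S := Finset.univ.filter fun i => 0 < hM.eigenvalues i with hS
  set b := hM.eigenvectorBasis with hb
  refine ⟨Submodule.span ℂ (Set.range fun i : {i // i ∈ S} => b i.1), ?_, ?_⟩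
  · have hon : Orthonormal ℂ fun i : {i // i ∈ S} => b i.1 :=
      b.orthonormal.comp _ Subtype.val_injective
    rw [finrank_span_eq_card hon.linearIndependent, Fintype.card_coe]
  · have hc : ∀ x ∈ Submodule.span ℂ (Set.range fun i : {i // i ∈ S} => b i.1),
        ∀ i, i ∉ S → b.repr x i = 0 := by
      let Z : Submodule ℂ (EuclideanSpace ℂ (Fin n)) :=
        { carrier := {x | ∀ i, i ∉ S → b.repr x i = 0}
          add_mem' := by intro x y hx hy i hi; simp [hx i hi, hy i hi]
          zero_mem' := by intro i hi; simp
          smul_mem' := by intro c x hx i hi; simp [hx i hi] }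
      have hspan : Submodule.span ℂ (Set.range fun i : {i // i ∈ S} => b i.1) ≤ Z := by
        rw [Submodule.span_le]
        rintro _ ⟨j, rfl⟩ i hi
        have : b.repr (b j.1) = EuclideanSpace.single j.1 1 := b.repr_self j.1
        rw [this, EuclideanSpace.single_apply]
        have : i ≠ j.1 := fun h => hi (h ▸ j.2)
        simp [this]
      exact fun x hx => hspan hx
    intro x hx
    rw [quad_expand hM x, norm_sq_expand b x, Finset.mul_sum]
    apply Finset.sum_le_sum
    intro i _
    by_cases hiS : i ∈ S
    · have hμ : 0 < hM.eigenvalues i := by simpa [hS] using hiS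
      exact mul_le_mul_of_nonneg_right (hd i hμ) (by positivity)
    · simp [← hb, hc x hx i hiS]

lemma exists_neg_subspace {n : ℕ} {M : Matrix (Fin n) (Fin n) ℂ} (hM : M.IsHermitian)
    {d : ℝ} (hd : ∀ i, hM.eigenvalues i < 0 → hM.eigenvalues i ≤ -d) :
    ∃ P : Submodule ℂ (EuclideanSpace ℂ (Fin n)),
      Module.finrank ℂ P = (Finset.univ.filter fun i => hM.eigenvalues i < 0).card ∧
      ∀ x ∈ P, (inner ℂ x (Matrix.toEuclideanLin M x) : ℂ).re ≤ -d * ‖x‖ ^ 2 := by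
  classical
  set S := Finset.univ.filter fun i => hM.eigenvalues i < 0 with hS
  set b := hM.eigenvectorBasis with hb
  refine ⟨Submodule.span ℂ (Set.range fun i : {i // i ∈ S} => b i.1), ?_, ?_⟩
  · have hon : Orthonormal ℂ fun i : {i // i ∈ S} => b i.1 :=
      b.orthonormal.comp _ Subtype.val_injective
    rw [finrank_span_eq_card hon.linearIndependent, Fintype.card_coe]
  · have hc : ∀ x ∈ Submodule.span ℂ (Set.range fun i : {i // i ∈ S} => b i.1),
        ∀ i, i ∉ S → b.repr x i = 0 := by
      let Z : Submodule ℂ (EuclideanSpace ℂ (Fin n)) :=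
        { carrier := {x | ∀ i, i ∉ S → b.repr x i = 0}
          add_mem' := by intro x y hx hy i hi; simp [hx i hi, hy i hi]
          zero_mem' := by intro i hi; simp
          smul_mem' := by intro c x hx i hi; simp [hx i hi] }
      have hspan : Submodule.span ℂ (Set.range fun i : {i // i ∈ S} => b i.1) ≤ Z := by
        rw [Submodule.span_le]
        rintro _ ⟨j, rfl⟩ i hi
        have : b.repr (b j.1) = EuclideanSpace.single j.1 1 := b.repr_self j.1
        rw [this, EuclideanSpace.single_apply]
        have : i ≠ j.1 := fun h => hi (h ▸ j.2)
        simp [this]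
      exact fun x hx => hspan hx
    intro x hx
    rw [quad_expand hM x, norm_sq_expand b x, Finset.mul_sum]
    apply Finset.sum_le_sum
    intro i _
    by_cases hiS : i ∈ S
    · have hμ : hM.eigenvalues i < 0 := by simpa [hS] using hiS
      exact mul_le_mul_of_nonneg_right (hd i hμ) (by positivity)
    · simp [← hb, hc x hx i hiS]

lemma TL_isHermitian {n : ℕ} (N : Matrix (Fin n) (Fin n) ℝ) (ω : ℂ) :
    (TLmatrix N ω).IsHermitian := by
  unfold TLmatrix Matrix.IsHermitian
  ext i j
  simp [Matrix.conjTranspose_apply, Matrix.transpose_apply, Complex.conj_ofReal, map_sub]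
  ring


theorem stmt_14 {n : ℕ} (N : Matrix (Fin n) (Fin n) ℝ) (ω : ℂ)
    (hω : ‖ω‖ = 1) (hω1 : ω ≠ 1)
    (hD : (ω • (N.map Complex.ofReal) - (N.map Complex.ofReal)ᵀ).det ≠ 0) :
    ∃ ε > (0 : ℝ), ∀ ω' : ℂ, ‖ω'‖ = 1 → ‖ω' - ω‖ < ε →
      ∀ (h' : (TLmatrix N ω').IsHermitian) (h : (TLmatrix N ω).IsHermitian),
        sgn h' = sgn h := by
  classical
  rcases Nat.eq_zero_or_pos n with hn | hn
  · subst hn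
    exact ⟨1, one_pos, fun ω' _ _ h' h => by simp [sgn, Finset.univ_eq_empty]⟩
  -- setup
  set A := N.map Complex.ofReal with hA
  have hω0 : ω ≠ 0 := by
    intro h0; rw [h0] at hω; simp at hω
  have hconj : (starRingEnd ℂ) ω = ω⁻¹ := by
    have h1 : (starRingEnd ℂ) ω * ω = 1 := by
      rw [mul_comm, Complex.mul_conj]
      norm_cast
      rw [Complex.normSq_eq_norm_sq, hω, one_pow]
    exact eq_inv_of_mul_eq_one_left h1
  have hTLfac : TLmatrix N ω = ((1 - ω) * ω⁻¹) • (ω • A - Aᵀ) := by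
    unfold TLmatrix
    rw [smul_sub, smul_smul]
    have h1 : (1 - ω) * ω⁻¹ * ω = 1 - ω := by field_simp
    have h2 : (1 - (starRingEnd ℂ) ω) = -((1 - ω) * ω⁻¹) := by
      rw [hconj]; field_simp; ring
    rw [h1, h2, neg_smul, ← sub_eq_add_neg, ← hA]
  have hdet : (TLmatrix N ω).det ≠ 0 := by
    rw [hTLfac, Matrix.det_smul]
    exact mul_ne_zero (pow_ne_zero _ (mul_ne_zero (sub_ne_zero.2 (Ne.symm hω1))
      (inv_ne_zero hω0))) hD
  have hHerm : (TLmatrix N ω).IsHermitian := TL_isHermitian N ω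
  set μ := hHerm.eigenvalues with hμdef
  have hμ : ∀ i, μ i ≠ 0 := by
    intro i hi
    apply hdet
    rw [hHerm.det_eq_prod_eigenvalues]
    apply Finset.prod_eq_zero (Finset.mem_univ i)
    rw [← hμdef, hi]; simp
  -- delta
  have hne : (Finset.univ : Finset (Fin n)).Nonempty := ⟨⟨0, hn⟩, Finset.mem_univ _⟩
  set δ := Finset.univ.inf' hne (fun i => |μ i|) with hδdef
  have hδ : 0 < δ := by
    rw [hδdef, Finset.lt_inf'_iff]
    exact fun i _ => abs_pos.2 (hμ i)
  have hdpos : ∀ i, 0 < μ i → δ ≤ μ i := by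
    intro i hi
    have h2 : δ ≤ |μ i| := Finset.inf'_le (fun i => |μ i|) (Finset.mem_univ i)
    rwa [abs_of_pos hi] at h2
  have hdneg : ∀ i, μ i < 0 → μ i ≤ -δ := by
    intro i hi
    have h2 : δ ≤ |μ i| := Finset.inf'_le (fun i => |μ i|) (Finset.mem_univ i)
    rw [abs_of_neg hi] at h2
    linarith
  -- continuity
  set g : ℂ → (EuclideanSpace ℂ (Fin n) →L[ℂ] EuclideanSpace ℂ (Fin n)) :=
    fun z => LinearMap.toContinuousLinearMap (Matrix.toEuclideanLin (TLmatrix N z)) with hgdef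
  have hgcont : Continuous g := by
    have hmat : Continuous fun z : ℂ => TLmatrix N z := by
      unfold TLmatrix
      simp only [starRingEnd_apply]
      exact ((continuous_const.sub continuous_id).smul continuous_const).add
        (((continuous_const.sub continuous_star).smul continuous_const))
    let F : Matrix (Fin n) (Fin n) ℂ →ₗ[ℂ]
        (EuclideanSpace ℂ (Fin n) →L[ℂ] EuclideanSpace ℂ (Fin n)) :=
      (LinearMap.toContinuousLinearMap (𝕜 := ℂ) (E := EuclideanSpace ℂ (Fin n))
        (F' := EuclideanSpace ℂ (Fin n))).toLinearMap.comp
        (Matrix.toEuclideanLin (𝕜 := ℂ) (m := Fin n) (n := Fin n)).toLinearMap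
    have hF : Continuous F := F.continuous_of_finiteDimensional
    exact hF.comp hmat
  obtain ⟨ε, hε, hball⟩ := Metric.continuousAt_iff.mp hgcont.continuousAt δ hδ
  refine ⟨ε, hε, ?_⟩
  intro ω' hω'1 hclose h' h
  rw [Subsingleton.elim h hHerm]
  set μ' := h'.eigenvalues with hμ'def
  have hdist : ‖g ω' - g ω‖ < δ := by
    have := hball (show dist ω' ω < ε by rwa [Complex.dist_eq])
    rwa [dist_eq_norm] at this
  -- quadratic form perturbation bound
  have Qdiff : ∀ x : EuclideanSpace ℂ (Fin n),
      |(inner ℂ x (Matrix.toEuclideanLin (TLmatrix N ω') x) : ℂ).re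
        - (inner ℂ x (Matrix.toEuclideanLin (TLmatrix N ω) x) : ℂ).re|
      ≤ ‖g ω' - g ω‖ * ‖x‖ ^ 2 := by
    intro x
    have h1 : (inner ℂ x (Matrix.toEuclideanLin (TLmatrix N ω') x) : ℂ).re
        - (inner ℂ x (Matrix.toEuclideanLin (TLmatrix N ω) x) : ℂ).re
        = (inner ℂ x ((g ω' - g ω) x) : ℂ).re := by
      rw [ContinuousLinearMap.sub_apply, inner_sub_right, Complex.sub_re]
      simp [hgdef]
    rw [h1]
    calc |(inner ℂ x ((g ω' - g ω) x) : ℂ).re|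
        ≤ ‖(inner ℂ x ((g ω' - g ω) x) : ℂ)‖ := Complex.abs_re_le_norm _
      _ ≤ ‖x‖ * ‖(g ω' - g ω) x‖ := norm_inner_le_norm _ _
      _ ≤ ‖x‖ * (‖g ω' - g ω‖ * ‖x‖) := by
          gcongr
          exact (g ω' - g ω).le_opNorm x
      _ = ‖g ω' - g ω‖ * ‖x‖ ^ 2 := by ring
  -- counts
  set p := (Finset.univ.filter fun i => 0 < μ i).card with hpdef
  set q := (Finset.univ.filter fun i => μ i < 0).card with hqdef
  set p' := (Finset.univ.filter fun i => 0 < μ' i).card with hp'def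
  set q' := (Finset.univ.filter fun i => μ' i < 0).card with hq'def
  have hdisj : Disjoint (Finset.univ.filter fun i => 0 < μ i)
      (Finset.univ.filter fun i => μ i < 0) := by
    rw [Finset.disjoint_left]
    intro i hi1 hi2
    simp only [Finset.mem_filter] at hi1 hi2
    linarith [hi1.2, hi2.2]
  have hpq : p + q = n := by
    rw [hpdef, hqdef, ← Finset.card_union_of_disjoint hdisj]
    have : (Finset.univ.filter fun i => 0 < μ i) ∪ (Finset.univ.filter fun i => μ i < 0)
        = Finset.univ := by
      ext i
      simp only [Finset.mem_union, Finset.mem_filter, Finset.mem_univ, true_and, iff_true]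
      exact ((hμ i).lt_or_gt).symm
    rw [this, Finset.card_univ, Fintype.card_fin]
  have hdisj' : Disjoint (Finset.univ.filter fun i => 0 < μ' i)
      (Finset.univ.filter fun i => μ' i < 0) := by
    rw [Finset.disjoint_left]
    intro i hi1 hi2
    simp only [Finset.mem_filter] at hi1 hi2
    linarith [hi1.2, hi2.2]
  have hpq' : p' + q' ≤ n := by
    rw [hp'def, hq'def, ← Finset.card_union_of_disjoint hdisj']
    calc _ ≤ (Finset.univ : Finset (Fin n)).card := Finset.card_le_univ _
      _ = n := by rw [Finset.card_univ, Fintype.card_fin]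
  -- p ≤ p'
  have hp : p ≤ p' := by
    obtain ⟨P, hPrank, hPpos⟩ := exists_pos_subspace hHerm hdpos
    rw [hpdef, ← hPrank, hp'def]
    apply finrank_le_card_pos h' P
    intro x hx hx0
    have hx2 : 0 < ‖x‖ ^ 2 := pow_pos (norm_pos_iff.2 hx0) 2
    have hb := (abs_le.mp (Qdiff x)).1
    have hq := hPpos x hx
    nlinarith [mul_pos (sub_pos.2 hdist) hx2]
  -- q ≤ q'
  have hq : q ≤ q' := by
    obtain ⟨P, hPrank, hPneg⟩ := exists_neg_subspace hHerm hdneg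
    rw [hqdef, ← hPrank, hq'def]
    apply finrank_le_card_neg h' P
    intro x hx hx0
    have hx2 : 0 < ‖x‖ ^ 2 := pow_pos (norm_pos_iff.2 hx0) 2
    have hb := (abs_le.mp (Qdiff x)).2
    have hqx := hPneg x hx
    nlinarith [mul_pos (sub_pos.2 hdist) hx2]
  -- conclude
  unfold sgn
  rw [← hμ'def, ← hμdef, ← hpdef, ← hqdef, ← hp'def, ← hq'def]
  have : p' = p ∧ q' = q := by omega
  rw [this.1, this.2]
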